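/- Let δ₀ > 0 be such that 𝒜(P) = A − B R⁻¹ Bᵀ P is Hurwitz for every symmetric P with ‖P − P*‖_F ≤ δ₀. Then there exists c₃ > 0 (depending only on δ₀) such that for every c₂ > 0 there exists δ₁ > 0 with the following property: for every symmetric P with ‖P − P*‖_F < δ₀ and every symmetric ΔG ∈ ℝ^{(n+m)×(n+m)} with ‖ΔG‖_F < δ₁ (with lower-left block ΔG₂₁ ∈ ℝ^{m×n} and lower-right block ΔG₂₂ ∈ ℝ^{m×m}), the matrix R + ΔG₂₂ is invertible, the gain K⁺ = (R + ΔG₂₂)⁻¹(BᵀP + ΔG₂₁) makes A − BK⁺ Hurwitz, and the error ℰ = Y₁ − Y₂ satisfies ‖ℰ‖_F ≤ c₃‖ΔG‖_F < c₂, where Y₁ is the unique symmetric solution of (A − BK⁺)ᵀY₁ + Y₁(A − BK⁺) = −(Q + K⁺ᵀRK⁺) and Y₂ is the unique symmetric solution of 𝒜(P)ᵀY₂ + Y₂𝒜(P) = −(Q + P B R⁻¹ Bᵀ P). -/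

import Mathlib

open Matrix MeasureTheory Filter NormedSpace
open scoped Kronecker

noncomputable section

/-- A real square matrix is Hurwitz if every eigenvalue over `ℂ` has negative real part. -/
def IsHurwitz {n : Type*} [Fintype n] [DecidableEq n] (X : Matrix n n ℝ) : Prop :=
  ∀ μ ∈ spectrum ℂ (X.map (algebraMap ℝ ℂ)), μ.re < 0

/-- The Frobenius norm of a real matrix. -/
def frobNorm {p q : Type*} [Fintype p] [Fintype q] (X : Matrix p q ℝ) : ℝ :=
  Real.sqrt (∑ i, ∑ j, (X i j) ^ 2)

/-- The spectral (ℓ²-operator) norm of a real matrix. -/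
def spec2Norm {p q : Type*} [Fintype p] [Fintype q] [DecidableEq q] (X : Matrix p q ℝ) : ℝ :=
  ‖LinearMap.toContinuousLinearMap (Matrix.toEuclideanLin X)‖

attribute [local instance] Matrix.normedAddCommGroup Matrix.normedSpace

/-!
Fix the compact family of closed-loop matrices `A - B K(P)`, `K(P) = R⁻¹BᵀP`, `‖P - P*‖ ≤ δ₀`.
For a Hurwitz `X` the Lyapunov operator `Y ↦ XᵀY + YX` is injective, because `X` and `-Xᵀ`
have disjoint spectra. The Hurwitz matrices form an open set (the spectrum is upper
hemicontinuous), so some closed neighbourhood of the family is still Hurwitz and compact, and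
there the Lyapunov operators satisfy a uniform bound `‖Y‖ ≤ M ‖XᵀY + YX‖`. A disturbance `ΔG`
moves the gain by `O(‖ΔG‖)`; subtracting the two Lyapunov equations and applying the uniform
bound shows that the solution moves by `O(‖ΔG‖)` as well.
-/

-- Takes precedence over the local sup-norm instance above: `‖·‖` below is the Frobenius norm.
open scoped Matrix.Norms.Frobenius

section FrobeniusNorm

variable {l m n o : Type*} [Fintype l] [Fintype m] [Fintype n] [Fintype o]

theorem frobNorm_eq_norm (X : Matrix m n ℝ) : frobNorm X = ‖X‖ := by
  simp [frobNorm, Matrix.frobenius_norm_def, Real.sqrt_eq_rpow]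

theorem Matrix.frobenius_norm_mul_mul_le (U : Matrix l m ℝ) (V : Matrix m n ℝ)
    (W : Matrix n o ℝ) : ‖U * V * W‖ ≤ ‖U‖ * ‖V‖ * ‖W‖ :=
  (frobenius_norm_mul _ _).trans (by gcongr; exact frobenius_norm_mul _ _)

theorem Matrix.frobenius_norm_toBlocks₂₁_le (A : Matrix (n ⊕ o) (l ⊕ m) ℝ) :
    ‖A.toBlocks₂₁‖ ≤ ‖A‖ := by
  simp only [← frobNorm_eq_norm, frobNorm]
  gcongr
  simp only [Fintype.sum_sum_type, Finset.sum_add_distrib, toBlocks₂₁, of_apply]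
  exact le_add_of_le_of_nonneg (le_add_of_nonneg_left (by positivity)) (by positivity)

theorem Matrix.frobenius_norm_toBlocks₂₂_le (A : Matrix (n ⊕ o) (l ⊕ m) ℝ) :
    ‖A.toBlocks₂₂‖ ≤ ‖A‖ := by
  simp only [← frobNorm_eq_norm, frobNorm]
  gcongr
  simp only [Fintype.sum_sum_type, Finset.sum_add_distrib, toBlocks₂₂, of_apply]
  exact le_add_of_nonneg_of_le (by positivity) (le_add_of_nonneg_left (by positivity))

end FrobeniusNorm

namespace Matrix

open Polynomial

variable {K : Type*} [Field K] {m n : Type*} [Fintype m] [DecidableEq m] [Fintype n]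
  [DecidableEq n]

theorem mul_aeval_eq_aeval_mul {A : Matrix n n K} {B : Matrix m m K} {W : Matrix m n K}
    (hW : W * A = B * W) (p : K[X]) : W * aeval A p = aeval B p * W := by
  induction p using Polynomial.induction_on' with
  | add p q hp hq => rw [map_add, map_add, Matrix.mul_add, Matrix.add_mul, hp, hq]
  | monomial k a =>
    have hpow : W * A ^ k = B ^ k * W := by
      induction k with
      | zero => simp
      | succ k ih => rw [pow_succ, pow_succ, ← Matrix.mul_assoc, ih, Matrix.mul_assoc, hW,
          Matrix.mul_assoc]
    simp only [aeval_monomial, Algebra.algebraMap_eq_smul_one, Matrix.smul_mul, Matrix.mul_smul,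
      Matrix.one_mul, hpow]

theorem spectrum_transpose (A : Matrix n n K) : spectrum K Aᵀ = spectrum K A := by
  ext z
  simp only [mem_spectrum_iff_isRoot_charpoly, charpoly_transpose]

theorem eq_zero_of_mul_eq_mul_of_disjoint_spectrum [IsAlgClosed K] {A : Matrix n n K}
    {B : Matrix m m K} {W : Matrix m n K} (hAB : Disjoint (spectrum K A) (spectrum K B))
    (hW : W * A = B * W) : W = 0 := by
  have hunit : IsUnit (aeval B A.charpoly) := by
    rw [(IsAlgClosed.splits _).eq_prod_roots_of_monic A.charpoly_monic]
    by_contra h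
    obtain ⟨z, hzB, hzA⟩ := spectrum.exists_mem_of_not_isUnit_aeval_prod h
    exact hAB.ne_of_mem (mem_spectrum_iff_isRoot_charpoly.2 hzA) hzB rfl
  calc W = ((aeval B A.charpoly)⁻¹ * aeval B A.charpoly) * W := by
        rw [nonsing_inv_mul _ ((isUnit_iff_isUnit_det _).1 hunit), Matrix.one_mul]
    _ = 0 := by
        rw [Matrix.mul_assoc, ← mul_aeval_eq_aeval_mul hW, aeval_self_charpoly, Matrix.mul_zero,
          Matrix.mul_zero]

end Matrix

theorem IsCompact.exists_pos_mul_norm_le_of_injective {α E F : Type*} [TopologicalSpace α]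
    [NormedAddCommGroup E] [NormedSpace ℝ E] [ProperSpace E] [NormedAddCommGroup F]
    [NormedSpace ℝ F] {K : Set α} (hK : IsCompact K) (L : α → E →ₗ[ℝ] F)
    (hL : Continuous fun p : α × E => L p.1 p.2) (hinj : ∀ x ∈ K, Function.Injective (L x)) :
    ∃ c > 0, ∀ x ∈ K, ∀ v, c * ‖v‖ ≤ ‖L x v‖ := by
  obtain ⟨c, hc, hcL⟩ := (hK.prod (isCompact_sphere (0 : E) 1)).exists_forall_le'
    (continuous_norm.comp hL).continuousOn (a := 0) fun ⟨x, v⟩ ⟨hx, hv⟩ => by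
      have hv0 : v ≠ 0 := ne_zero_of_mem_unit_sphere ⟨v, hv⟩
      simpa using (map_ne_zero_iff _ (hinj x hx)).2 hv0
  refine ⟨c, hc, fun x hx v => ?_⟩
  rcases eq_or_ne v 0 with rfl | hv
  · simp
  have hv' : 0 < ‖v‖ := norm_pos_iff.2 hv
  have := hcL (x, ‖v‖⁻¹ • v) ⟨hx, by simp [norm_smul, hv'.ne']⟩
  simp only [Function.comp_apply, map_smul, norm_smul, norm_inv, norm_norm] at this
  rwa [le_inv_mul_iff₀ hv', mul_comm] at this

section Lyapunov

variable {ι : Type*} [Fintype ι] [DecidableEq ι]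

def lyapunov (X : Matrix ι ι ℝ) : Matrix ι ι ℝ →ₗ[ℝ] Matrix ι ι ℝ :=
  LinearMap.mulLeft ℝ Xᵀ + LinearMap.mulRight ℝ X

@[simp]
theorem lyapunov_apply (X Y : Matrix ι ι ℝ) : lyapunov X Y = Xᵀ * Y + Y * X := rfl

theorem continuous_lyapunov_apply :
    Continuous fun p : Matrix ι ι ℝ × Matrix ι ι ℝ => lyapunov p.1 p.2 := by
  simp only [lyapunov_apply]
  fun_prop

theorem IsHurwitz.lyapunov_injective {X : Matrix ι ι ℝ} (hX : IsHurwitz X) :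
    Function.Injective (lyapunov X) := by
  refine (injective_iff_map_eq_zero _).2 fun Y hY => ?_
  set f : ℝ →+* ℂ := algebraMap ℝ ℂ
  have hYX : Y.map f * X.map f = -(X.map f)ᵀ * Y.map f := by
    rw [lyapunov_apply, add_eq_zero_iff_eq_neg'] at hY
    rw [← Matrix.map_mul, hY, Matrix.neg_mul, Matrix.map_neg _ (map_neg f), Matrix.map_mul,
      Matrix.transpose_map]
  have hdisj : Disjoint (spectrum ℂ (X.map f)) (spectrum ℂ (-(X.map f)ᵀ)) := by
    rw [← spectrum.neg_eq, Matrix.spectrum_transpose, Set.disjoint_left]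
    intro z hz hz'
    have hre := hX z hz
    have hre' := hX (-z) hz'
    rw [Complex.neg_re] at hre'
    linarith
  have hYc := Matrix.eq_zero_of_mul_eq_mul_of_disjoint_spectrum hdisj hYX
  exact Matrix.map_injective f.injective (by simpa using hYc)

theorem isOpen_setOf_isHurwitz : IsOpen {X : Matrix ι ι ℝ | IsHurwitz X} :=
  (upperHemicontinuous_iff_isOpen_preimage_Iic.1 (upperHemicontinuous_spectrum ℂ (Matrix ι ι ℂ))
    {z | z.re < 0} (isOpen_lt Complex.continuous_re continuous_const)).preimage
    (continuous_id.matrix_map Complex.continuous_ofReal)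

theorem IsCompact.exists_cthickening_isHurwitz_norm_le_lyapunov {S : Set (Matrix ι ι ℝ)}
    (hS : IsCompact S) (hHur : ∀ X ∈ S, IsHurwitz X) :
    ∃ η > 0, ∃ M ≥ 0, ∀ X ∈ Metric.cthickening η S,
      IsHurwitz X ∧ ∀ Y, ‖Y‖ ≤ M * ‖lyapunov X Y‖ := by
  obtain ⟨η, hη, hηS⟩ := hS.exists_cthickening_subset_open isOpen_setOf_isHurwitz hHur
  obtain ⟨c, hc, hcL⟩ := hS.cthickening.exists_pos_mul_norm_le_of_injective lyapunov
    continuous_lyapunov_apply fun X hX => (hηS hX).lyapunov_injective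
  refine ⟨η, hη, c⁻¹, by positivity, fun X hX => ⟨hηS hX, fun Y => ?_⟩⟩
  rw [inv_mul_eq_div, le_div_iff₀ hc, mul_comm]
  exact hcL X hX Y

theorem norm_sub_le_of_lyapunov {X X' Y₁ Y₂ Z₁ Z₂ : Matrix ι ι ℝ} {M : ℝ} (hM : 0 ≤ M)
    (hX : ∀ Y, ‖Y‖ ≤ M * ‖lyapunov X Y‖) (hX' : ∀ Y, ‖Y‖ ≤ M * ‖lyapunov X' Y‖)
    (h₁ : lyapunov X' Y₁ = -Z₁) (h₂ : lyapunov X Y₂ = -Z₂) :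
    ‖Y₁ - Y₂‖ ≤ M * (‖Z₁ - Z₂‖ + 2 * ‖X - X'‖ * (M * ‖Z₁‖)) := by
  have hY₁ : ‖Y₁‖ ≤ M * ‖Z₁‖ := by simpa [h₁] using hX' Y₁
  have hdiff : lyapunov X (Y₁ - Y₂) = -(Z₁ - Z₂) + ((X - X')ᵀ * Y₁ + Y₁ * (X - X')) := by
    obtain rfl : Z₁ = -lyapunov X' Y₁ := by rw [h₁, neg_neg]
    rw [map_sub, h₂]
    simp only [lyapunov_apply, Matrix.transpose_sub, Matrix.sub_mul, Matrix.mul_sub]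
    abel
  have hpert : ‖(X - X')ᵀ * Y₁ + Y₁ * (X - X')‖ ≤ 2 * ‖X - X'‖ * ‖Y₁‖ := by
    calc _ ≤ ‖(X - X')ᵀ‖ * ‖Y₁‖ + ‖Y₁‖ * ‖X - X'‖ :=
          (norm_add_le _ _).trans (add_le_add (Matrix.frobenius_norm_mul _ _)
            (Matrix.frobenius_norm_mul _ _))
      _ = 2 * ‖X - X'‖ * ‖Y₁‖ := by rw [Matrix.frobenius_norm_transpose]; ring
  calc ‖Y₁ - Y₂‖ ≤ M * ‖lyapunov X (Y₁ - Y₂)‖ := hX _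
    _ ≤ M * (‖Z₁ - Z₂‖ + 2 * ‖X - X'‖ * ‖Y₁‖) := by
        rw [hdiff]
        gcongr
        exact (norm_add_le _ _).trans (by rw [norm_neg]; gcongr)
    _ ≤ M * (‖Z₁ - Z₂‖ + 2 * ‖X - X'‖ * (M * ‖Z₁‖)) := by gcongr

end Lyapunov

section ClosedLoop

variable {ι κ : Type*} [Fintype ι] [DecidableEq ι] [Fintype κ] {A : Matrix ι ι ℝ}
  {B : Matrix ι κ ℝ} {Q : Matrix ι ι ℝ} {R : Matrix κ κ ℝ}

theorem norm_sub_le_of_lyapunov_closedLoop {K K' : Matrix κ ι ℝ} {Y₁ Y₂ : Matrix ι ι ℝ} {M : ℝ}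
    (hM : 0 ≤ M) (hX : ∀ Y, ‖Y‖ ≤ M * ‖lyapunov (A - B * K) Y‖)
    (hX' : ∀ Y, ‖Y‖ ≤ M * ‖lyapunov (A - B * K') Y‖)
    (h₁ : lyapunov (A - B * K') Y₁ = -(Q + K'ᵀ * R * K'))
    (h₂ : lyapunov (A - B * K) Y₂ = -(Q + Kᵀ * R * K)) :
    ‖Y₁ - Y₂‖ ≤ M * (‖R‖ * (‖K'‖ + ‖K‖) + 2 * ‖B‖ * (M * (‖Q‖ + ‖R‖ * ‖K'‖ ^ 2))) *
      ‖K' - K‖ := by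
  have hX_sub : A - B * K - (A - B * K') = B * (K' - K) := by
    rw [Matrix.mul_sub]
    abel
  have hcost_sub : Q + K'ᵀ * R * K' - (Q + Kᵀ * R * K)
      = (K' - K)ᵀ * R * K' + Kᵀ * R * (K' - K) := by
    simp only [Matrix.transpose_sub, Matrix.sub_mul, Matrix.mul_sub, Matrix.mul_assoc]
    abel
  have hcost : ‖(K' - K)ᵀ * R * K' + Kᵀ * R * (K' - K)‖ ≤ ‖R‖ * (‖K'‖ + ‖K‖) * ‖K' - K‖ := by
    refine (norm_add_le _ _).trans ?_
    grw [Matrix.frobenius_norm_mul_mul_le, Matrix.frobenius_norm_mul_mul_le]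
    simp only [Matrix.frobenius_norm_transpose]
    linarith
  have hcost₁ : ‖Q + K'ᵀ * R * K'‖ ≤ ‖Q‖ + ‖R‖ * ‖K'‖ ^ 2 := by
    grw [norm_add_le, Matrix.frobenius_norm_mul_mul_le, Matrix.frobenius_norm_transpose]
    linarith
  calc ‖Y₁ - Y₂‖
      ≤ M * (‖Q + K'ᵀ * R * K' - (Q + Kᵀ * R * K)‖
          + 2 * ‖A - B * K - (A - B * K')‖ * (M * ‖Q + K'ᵀ * R * K'‖)) :=
        norm_sub_le_of_lyapunov hM hX hX' h₁ h₂
    _ ≤ M * (‖R‖ * (‖K'‖ + ‖K‖) * ‖K' - K‖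
          + 2 * (‖B‖ * ‖K' - K‖) * (M * (‖Q‖ + ‖R‖ * ‖K'‖ ^ 2))) := by
        rw [hcost_sub, hX_sub]
        gcongr
        exact Matrix.frobenius_norm_mul _ _
    _ = _ := by ring

variable (Q R) in
theorem IsCompact.exists_lyapunov_closedLoop_sub_le {𝒦 : Set (Matrix κ ι ℝ)} (h𝒦 : IsCompact 𝒦)
    (hHur : ∀ K ∈ 𝒦, IsHurwitz (A - B * K)) :
    ∃ C ≥ 0, ∃ ρ > 0, ∀ K ∈ 𝒦, ∀ K', ‖K' - K‖ ≤ ρ → IsHurwitz (A - B * K') ∧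
      ∀ Y₁ Y₂, lyapunov (A - B * K') Y₁ = -(Q + K'ᵀ * R * K') →
        lyapunov (A - B * K) Y₂ = -(Q + Kᵀ * R * K) → ‖Y₁ - Y₂‖ ≤ C * ‖K' - K‖ := by
  set S := (fun K => A - B * K) '' 𝒦
  obtain ⟨η, hη, M, hM, hS⟩ := (h𝒦.image (f := fun K => A - B * K) (by fun_prop))
    |>.exists_cthickening_isHurwitz_norm_le_lyapunov (by rintro _ ⟨K, hK, rfl⟩; exact hHur K hK)
  obtain ⟨k, hk, hk𝒦⟩ := h𝒦.isBounded.exists_pos_norm_le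
  refine ⟨M * (‖R‖ * (k + 1 + k) + 2 * ‖B‖ * (M * (‖Q‖ + ‖R‖ * (k + 1) ^ 2))), by positivity,
    min 1 (η / (‖B‖ + 1)), by positivity, fun K hK K' hK' => ?_⟩
  have hX : A - B * K ∈ Metric.cthickening η S :=
    Metric.self_subset_cthickening _ ⟨K, hK, rfl⟩
  have hX' : A - B * K' ∈ Metric.cthickening η S := by
    refine Metric.mem_cthickening_of_dist_le _ _ _ _ ⟨K, hK, rfl⟩ ?_
    have hB : ‖B‖ * (η / (‖B‖ + 1)) ≤ η := by
      rw [mul_div_assoc', div_le_iff₀ (by positivity)]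
      nlinarith [norm_nonneg B]
    calc dist (A - B * K') (A - B * K) = ‖B * (K - K')‖ := by
          rw [dist_eq_norm, Matrix.mul_sub]; congr 1; abel
      _ ≤ ‖B‖ * ‖K' - K‖ := by rw [norm_sub_rev]; exact Matrix.frobenius_norm_mul _ _
      _ ≤ ‖B‖ * (η / (‖B‖ + 1)) := by gcongr; exact hK'.trans (min_le_right _ _)
      _ ≤ η := hB
  refine ⟨(hS _ hX').1, fun Y₁ Y₂ h₁ h₂ => ?_⟩
  have hK'k : ‖K'‖ ≤ k + 1 := by
    have := norm_le_norm_add_norm_sub' K' K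
    linarith [hk𝒦 K hK, hK'.trans (min_le_left _ _)]
  refine (norm_sub_le_of_lyapunov_closedLoop hM (hS _ hX).2 (hS _ hX').2 h₁ h₂).trans ?_
  gcongr
  exact hk𝒦 K hK

end ClosedLoop

section GainPerturbation

variable {ι κ : Type*} [Fintype ι] [Fintype κ] [DecidableEq κ]

theorem Matrix.isUnit_add_and_norm_inv_le {R D : Matrix κ κ ℝ} (hR : IsUnit R)
    (hD : 2 * ‖R⁻¹‖ * ‖D‖ ≤ 1) : IsUnit (R + D) ∧ ‖(R + D)⁻¹‖ ≤ 2 * ‖R⁻¹‖ := by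
  have hRdet := (isUnit_iff_isUnit_det R).1 hR
  have hsmall : ‖R⁻¹ * D‖ ≤ 1 / 2 := by
    grw [frobenius_norm_mul]
    linarith
  have hunit : IsUnit (R + D) := by
    have : R + D = R * (1 - -(R⁻¹ * D)) := by
      rw [sub_neg_eq_add, Matrix.mul_add, mul_nonsing_inv_cancel_left _ _ hRdet, Matrix.mul_one]
    rw [this]
    exact hR.mul (Units.oneSub _ (by rw [norm_neg]; linarith)).isUnit
  refine ⟨hunit, ?_⟩
  have hresolvent : (R + D)⁻¹ = R⁻¹ - R⁻¹ * D * (R + D)⁻¹ := by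
    have : R⁻¹ * (R + D) * (R + D)⁻¹ = R⁻¹ := by
      rw [Matrix.mul_assoc, mul_nonsing_inv _ ((isUnit_iff_isUnit_det _).1 hunit),
        Matrix.mul_one]
    rw [Matrix.mul_add, Matrix.add_mul, nonsing_inv_mul _ hRdet, Matrix.one_mul] at this
    exact eq_sub_of_add_eq this
  have : ‖(R + D)⁻¹‖ ≤ ‖R⁻¹‖ + 1 / 2 * ‖(R + D)⁻¹‖ := by
    calc ‖(R + D)⁻¹‖ ≤ ‖R⁻¹‖ + ‖R⁻¹ * D‖ * ‖(R + D)⁻¹‖ := by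
          nth_rw 1 [hresolvent]
          exact (norm_sub_le _ _).trans (by grw [frobenius_norm_mul (R⁻¹ * D)])
      _ ≤ ‖R⁻¹‖ + 1 / 2 * ‖(R + D)⁻¹‖ := by gcongr
  linarith

theorem Matrix.norm_inv_add_mul_add_sub_le {R D : Matrix κ κ ℝ} {K E F : Matrix κ ι ℝ}
    (hR : IsUnit R) (hK : R * K = F) {ε : ℝ} (hD : ‖D‖ ≤ ε) (hE : ‖E‖ ≤ ε)
    (hε : 2 * ‖R⁻¹‖ * ε ≤ 1) :
    IsUnit (R + D) ∧ ‖(R + D)⁻¹ * (F + E) - K‖ ≤ 2 * ‖R⁻¹‖ * (1 + ‖K‖) * ε := by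
  obtain ⟨hunit, hinv⟩ := isUnit_add_and_norm_inv_le hR (by grw [hD]; exact hε)
  refine ⟨hunit, ?_⟩
  have hgain : (R + D)⁻¹ * (F + E) - K = (R + D)⁻¹ * (E - D * K) := by
    calc (R + D)⁻¹ * (F + E) - K = (R + D)⁻¹ * (R * K + E) - (R + D)⁻¹ * ((R + D) * K) := by
          rw [hK, nonsing_inv_mul_cancel_left _ _ ((isUnit_iff_isUnit_det _).1 hunit)]
      _ = (R + D)⁻¹ * (E - D * K) := by
          rw [← Matrix.mul_sub, Matrix.add_mul]
          congr 1
          abel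
  have hDK : ‖D * K‖ ≤ ε * ‖K‖ := by grw [frobenius_norm_mul, hD]
  rw [hgain]
  grw [frobenius_norm_mul, hinv, norm_sub_le, hE, hDK]
  linarith

end GainPerturbation

section LQRGain

variable {ι κ : Type*} [Fintype ι] [Fintype κ] [DecidableEq κ]

def lqrGain (R : Matrix κ κ ℝ) (B : Matrix ι κ ℝ) (P : Matrix ι ι ℝ) : Matrix κ ι ℝ :=
  R⁻¹ * (Bᵀ * P)

variable {R : Matrix κ κ ℝ} {B : Matrix ι κ ℝ} {P : Matrix ι ι ℝ}

theorem mul_lqrGain : B * lqrGain R B P = B * R⁻¹ * Bᵀ * P := by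
  simp only [lqrGain, Matrix.mul_assoc]

theorem mul_lqrGain_of_isUnit (hR : IsUnit R) : R * lqrGain R B P = Bᵀ * P :=
  Matrix.mul_nonsing_inv_cancel_left _ _ ((Matrix.isUnit_iff_isUnit_det R).1 hR)

theorem lqrGain_transpose_mul_mul (hR : IsUnit R) (hRs : R.IsSymm) (hPs : P.IsSymm) :
    (lqrGain R B P)ᵀ * R * lqrGain R B P = P * B * R⁻¹ * Bᵀ * P := by
  rw [Matrix.mul_assoc, mul_lqrGain_of_isUnit hR, lqrGain, Matrix.transpose_mul,
    Matrix.transpose_mul, Matrix.transpose_nonsing_inv, hRs.eq, hPs.eq, Matrix.transpose_transpose]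
  simp only [Matrix.mul_assoc]

theorem continuous_lqrGain : Continuous (lqrGain R B) := by
  unfold lqrGain
  fun_prop

end LQRGain

theorem disturbed_policy_iteration_one_step_error_bound_general
    (n m : ℕ)
    (A : Matrix (Fin n) (Fin n) ℝ) (B : Matrix (Fin n) (Fin m) ℝ)
    (Q : Matrix (Fin n) (Fin n) ℝ) (R : Matrix (Fin m) (Fin m) ℝ)
    (hR : R.PosDef)
    (Pstar : Matrix (Fin n) (Fin n) ℝ)
    (δ₀ : ℝ)
    (hHurBall : ∀ P : Matrix (Fin n) (Fin n) ℝ, P.IsSymm → frobNorm (P - Pstar) ≤ δ₀ →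
      IsHurwitz (A - B * R⁻¹ * Bᵀ * P)) :
    ∃ c₃ > 0, ∀ c₂ > 0, ∃ δ₁ > 0,
      ∀ P : Matrix (Fin n) (Fin n) ℝ, P.IsSymm → frobNorm (P - Pstar) < δ₀ →
      ∀ ΔG : Matrix (Fin n ⊕ Fin m) (Fin n ⊕ Fin m) ℝ, ΔG.IsSymm → frobNorm ΔG < δ₁ →
        IsUnit (R + ΔG.toBlocks₂₂) ∧
        IsHurwitz (A - B * ((R + ΔG.toBlocks₂₂)⁻¹ * (Bᵀ * P + ΔG.toBlocks₂₁))) ∧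
        ∀ Y₁ Y₂ : Matrix (Fin n) (Fin n) ℝ, Y₁.IsSymm → Y₂.IsSymm →
          (A - B * ((R + ΔG.toBlocks₂₂)⁻¹ * (Bᵀ * P + ΔG.toBlocks₂₁)))ᵀ * Y₁
              + Y₁ * (A - B * ((R + ΔG.toBlocks₂₂)⁻¹ * (Bᵀ * P + ΔG.toBlocks₂₁)))
            = -(Q + ((R + ΔG.toBlocks₂₂)⁻¹ * (Bᵀ * P + ΔG.toBlocks₂₁))ᵀ * R
                * ((R + ΔG.toBlocks₂₂)⁻¹ * (Bᵀ * P + ΔG.toBlocks₂₁))) →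
          (A - B * R⁻¹ * Bᵀ * P)ᵀ * Y₂ + Y₂ * (A - B * R⁻¹ * Bᵀ * P)
            = -(Q + P * B * R⁻¹ * Bᵀ * P) →
          frobNorm (Y₁ - Y₂) ≤ c₃ * frobNorm ΔG ∧ c₃ * frobNorm ΔG < c₂ := by
  have hRs : R.IsSymm := by
    simpa [Matrix.IsHermitian, Matrix.IsSymm] using hR.isHermitian
  set U := Metric.closedBall Pstar δ₀ ∩ {P | P.IsSymm}
  have h𝒦 : IsCompact (lqrGain R B '' U) :=
    ((isCompact_closedBall _ _).inter_right (isClosed_eq (by fun_prop) continuous_id)).image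
      continuous_lqrGain
  obtain ⟨C, hC, ρ, hρ, hgain⟩ := h𝒦.exists_lyapunov_closedLoop_sub_le (A := A) Q R (by
    rintro _ ⟨P, ⟨hP, hPs⟩, rfl⟩
    rw [mul_lqrGain]
    exact hHurBall P hPs (by rwa [frobNorm_eq_norm, ← dist_eq_norm]))
  obtain ⟨k, hk, hk𝒦⟩ := h𝒦.isBounded.exists_pos_norm_le
  set d := 2 * ‖R⁻¹‖ * (1 + k) with hd
  refine ⟨C * d + 1, by positivity, fun c₂ hc₂ => ⟨min (min (1 / (2 * ‖R⁻¹‖ + 1)) (ρ / (d + 1)))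
    (c₂ / (C * d + 1)), by positivity, fun P hPs hP ΔG _ hΔG => ?_⟩⟩
  simp only [frobNorm_eq_norm, lt_min_iff] at hP hΔG ⊢
  have hK : lqrGain R B P ∈ lqrGain R B '' U :=
    ⟨P, ⟨by rw [Metric.mem_closedBall, dist_eq_norm]; exact hP.le, hPs⟩, rfl⟩
  obtain ⟨⟨hΔR, hΔρ⟩, hΔc₂⟩ := hΔG
  rw [lt_div_iff₀ (by positivity)] at hΔR hΔρ hΔc₂
  obtain ⟨hunit, hK'⟩ := Matrix.norm_inv_add_mul_add_sub_le hR.isUnit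
    (mul_lqrGain_of_isUnit (B := B) (P := P) hR.isUnit) ΔG.frobenius_norm_toBlocks₂₂_le
    ΔG.frobenius_norm_toBlocks₂₁_le (by nlinarith [norm_nonneg ΔG])
  have hdK : ‖(R + ΔG.toBlocks₂₂)⁻¹ * (Bᵀ * P + ΔG.toBlocks₂₁) - lqrGain R B P‖ ≤ d * ‖ΔG‖ :=
    hK'.trans (by rw [hd]; gcongr; exact hk𝒦 _ hK)
  obtain ⟨hHur, hY⟩ := hgain _ hK _ (hdK.trans (by nlinarith [norm_nonneg ΔG]))
  refine ⟨hunit, hHur, fun Y₁ Y₂ _ _ h₁ h₂ => ⟨?_, by linarith⟩⟩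
  have hY₁₂ := hY Y₁ Y₂ h₁ (by rwa [mul_lqrGain, lqrGain_transpose_mul_mul hR.isUnit hRs hPs])
  calc ‖Y₁ - Y₂‖ ≤ C * (d * ‖ΔG‖) := hY₁₂.trans (by gcongr)
    _ ≤ (C * d + 1) * ‖ΔG‖ := by nlinarith [norm_nonneg ΔG]

/-- the one-step policy-evaluation error caused by a small disturbance
`ΔG` is bounded linearly in `‖ΔG‖_F` and can be made smaller than any `c₂ > 0`. -/
theorem disturbed_policy_iteration_one_step_error_bound
    (n m : ℕ) (hn : 0 < n) (hm : 0 < m)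
    (A : Matrix (Fin n) (Fin n) ℝ) (B : Matrix (Fin n) (Fin m) ℝ)
    (Q : Matrix (Fin n) (Fin n) ℝ) (R : Matrix (Fin m) (Fin m) ℝ)
    (hQ : Q.PosSemidef) (hR : R.PosDef)
    (Pstar : Matrix (Fin n) (Fin n) ℝ) (hPstar : Pstar.PosDef)
    (hARE : Aᵀ * Pstar + Pstar * A - Pstar * B * R⁻¹ * Bᵀ * Pstar + Q = 0)
    (hAstar : IsHurwitz (A - B * R⁻¹ * Bᵀ * Pstar))
    (δ₀ : ℝ) (hδ₀ : 0 < δ₀)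
    (hHurBall : ∀ P : Matrix (Fin n) (Fin n) ℝ, P.IsSymm → frobNorm (P - Pstar) ≤ δ₀ →
      IsHurwitz (A - B * R⁻¹ * Bᵀ * P)) :
    ∃ c₃ > 0, ∀ c₂ > 0, ∃ δ₁ > 0,
      ∀ P : Matrix (Fin n) (Fin n) ℝ, P.IsSymm → frobNorm (P - Pstar) < δ₀ →
      ∀ ΔG : Matrix (Fin n ⊕ Fin m) (Fin n ⊕ Fin m) ℝ, ΔG.IsSymm → frobNorm ΔG < δ₁ →
        IsUnit (R + ΔG.toBlocks₂₂) ∧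
        IsHurwitz (A - B * ((R + ΔG.toBlocks₂₂)⁻¹ * (Bᵀ * P + ΔG.toBlocks₂₁))) ∧
        ∀ Y₁ Y₂ : Matrix (Fin n) (Fin n) ℝ, Y₁.IsSymm → Y₂.IsSymm →
          (A - B * ((R + ΔG.toBlocks₂₂)⁻¹ * (Bᵀ * P + ΔG.toBlocks₂₁)))ᵀ * Y₁
              + Y₁ * (A - B * ((R + ΔG.toBlocks₂₂)⁻¹ * (Bᵀ * P + ΔG.toBlocks₂₁)))
            = -(Q + ((R + ΔG.toBlocks₂₂)⁻¹ * (Bᵀ * P + ΔG.toBlocks₂₁))ᵀ * R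
                * ((R + ΔG.toBlocks₂₂)⁻¹ * (Bᵀ * P + ΔG.toBlocks₂₁))) →
          (A - B * R⁻¹ * Bᵀ * P)ᵀ * Y₂ + Y₂ * (A - B * R⁻¹ * Bᵀ * P)
            = -(Q + P * B * R⁻¹ * Bᵀ * P) →
          frobNorm (Y₁ - Y₂) ≤ c₃ * frobNorm ΔG ∧ c₃ * frobNorm ΔG < c₂ :=
  disturbed_policy_iteration_one_step_error_bound_general n m A B Q R hR Pstar δ₀ hHurBall
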